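/- arXiv:2010.13138 — 3 statements merged into one kernel-verified Lean document; each statement's English description precedes it below -/
import Mathlib

section
/- For any a ∈ ℝ, σ > 0 and b ∈ ℝ, the uniform (Kolmogorov) distance between the normal distribution functions Φ_{a+b,σ} and Φ_{a,σ} equals 2Φ_{0,σ}(|b|/2) − 1. -/
open MeasureTheory Real

/-- The normal distribution function with mean `a` and standard deviation `σ`. -/
noncomputable def normCDF (a σ x : ℝ) : ℝ :=
  (σ * Real.sqrt (2 * Real.pi))⁻¹ * ∫ z in Set.Iic x, Real.exp (-(z - a) ^ 2 / (2 * σ ^ 2))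

/-- The uniform (Kolmogorov) distance between two distribution functions. -/
noncomputable def kolmDist (H G : ℝ → ℝ) : ℝ := ⨆ x : ℝ, |H x - G x|

section Aux

variable {σ : ℝ} (hσ : 0 < σ)

/-- The centered Gaussian density (unnormalized). -/
noncomputable def gK (σ z : ℝ) : ℝ := Real.exp (-z ^ 2 / (2 * σ ^ 2))

lemma gK_integrable (hσ : 0 < σ) : Integrable (gK σ) := by
  have h : gK σ = fun z => Real.exp (-(2 * σ ^ 2)⁻¹ * z ^ 2) := by
    funext z; unfold gK; ring_nf
  rw [h]
  exact integrable_exp_neg_mul_sq (by positivity)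

lemma gK_total (hσ : 0 < σ) : ∫ z, gK σ z = σ * Real.sqrt (2 * Real.pi) := by
  have h : gK σ = fun z => Real.exp (-(2 * σ ^ 2)⁻¹ * z ^ 2) := by
    funext z; unfold gK; ring_nf
  rw [h, integral_gaussian]
  rw [show π / (2 * σ ^ 2)⁻¹ = σ ^ 2 * (2 * π) by field_simp]
  rw [Real.sqrt_mul (sq_nonneg σ), Real.sqrt_sq hσ.le]

lemma Iic_shift (f : ℝ → ℝ) (c aa : ℝ) :
    (∫ x in Set.Iic c, f (x - aa)) = ∫ x in Set.Iic (c - aa), f x := by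
  have A : MeasurableEmbedding fun x : ℝ => x - aa :=
    (Homeomorph.subRight aa).isClosedEmbedding.measurableEmbedding
  have hmap : Measure.map (fun x : ℝ => x - aa) volume = volume := by
    simpa [sub_eq_add_neg] using Measure.IsAddRightInvariant.map_add_right_eq_self (μ := (volume : Measure ℝ)) (-aa)
  have h2 := A.setIntegral_map (μ := volume) f (Set.Iic (c - aa))
  rw [hmap] at h2
  have hpre : (fun x : ℝ => x - aa) ⁻¹' Set.Iic (c - aa) = Set.Iic c := by
    ext x; simp
  rw [hpre] at h2
  exact h2.symm

lemma normCDF_eq (hσ : 0 < σ) (aa x : ℝ) :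
    normCDF aa σ x = (σ * Real.sqrt (2 * Real.pi))⁻¹ * ∫ z in Set.Iic (x - aa), gK σ z := by
  unfold normCDF
  congr 1
  rw [← Iic_shift (gK σ) x aa]
  rfl


lemma gK_nonneg (σ z : ℝ) : 0 ≤ gK σ z := Real.exp_nonneg _

lemma gK_intervalIntegrable (hσ : 0 < σ) (p q : ℝ) :
    IntervalIntegrable (gK σ) volume p q :=
  (gK_integrable hσ).intervalIntegrable

lemma gK_even_interval (σ p q : ℝ) :
    (∫ z in p..q, gK σ z) = ∫ z in (-q)..(-p), gK σ z := by
  rw [← intervalIntegral.integral_comp_neg (fun z => gK σ z)]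
  unfold gK
  simp [neg_sq]

/-- Helper: for `b/2 ≤ u`, the interval of length `b` ending at `u` carries
less Gaussian mass than the centered one. -/
lemma gK_key_half (hσ : 0 < σ) {b u : ℝ} (hb : 0 ≤ b) (h : b / 2 ≤ u) :
    (∫ z in (u - b)..u, gK σ z) ≤ ∫ z in (-(b / 2))..(b / 2), gK σ z := by
  have hint := gK_intervalIntegrable hσ
  have hsplit : (∫ z in (u - b)..u, gK σ z)
      = (∫ z in (u - b)..(-(b / 2)), gK σ z) + (∫ z in (-(b / 2))..(b / 2), gK σ z)
        + ∫ z in (b / 2)..u, gK σ z := by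
    rw [intervalIntegral.integral_add_adjacent_intervals (hint _ _) (hint _ _),
      intervalIntegral.integral_add_adjacent_intervals (hint _ _) (hint _ _)]
  have hshift : (∫ z in (b / 2)..u, gK σ z)
      = ∫ z in (-(b / 2))..(u - b), gK σ (z + b) := by
    rw [intervalIntegral.integral_comp_add_right (fun z => gK σ z) b,
      show -(b / 2) + b = b / 2 by ring, sub_add_cancel]
  have hcmp : (∫ z in (-(b / 2))..(u - b), gK σ (z + b))
      ≤ ∫ z in (-(b / 2))..(u - b), gK σ z := by
    apply intervalIntegral.integral_mono_on (by linarith)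
    · exact ((gK_integrable hσ).comp_add_right b).intervalIntegrable
    · exact hint _ _
    · intro x hx
      have hx1 : -(b / 2) ≤ x := hx.1
      have hsq : x ^ 2 ≤ (x + b) ^ 2 := by nlinarith
      unfold gK
      apply Real.exp_le_exp.mpr
      apply (div_le_div_iff_of_pos_right (by positivity)).mpr
      linarith
  have hsym : (∫ z in (u - b)..(-(b / 2)), gK σ z)
      = -∫ z in (-(b / 2))..(u - b), gK σ z := intervalIntegral.integral_symm _ _
  rw [hsplit, hsym, hshift]
  linarith

lemma gK_key (hσ : 0 < σ) {b : ℝ} (hb : 0 ≤ b) (u : ℝ) :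
    (∫ z in (u - b)..u, gK σ z) ≤ ∫ z in (-(b / 2))..(b / 2), gK σ z := by
  rcases le_total (b / 2) u with h | h
  · exact gK_key_half hσ hb h
  · have := gK_key_half hσ hb (u := b - u) (by linarith)
    rw [gK_even_interval σ (u - b) u, show -u = b - u - b by ring,
      show -(u - b) = b - u by ring]
    exact this

end Aux

lemma kolmDist_normCDF_shift_nonneg (a σ b : ℝ) (hσ : 0 < σ) (hb : 0 ≤ b) :
    kolmDist (normCDF (a + b) σ) (normCDF a σ) = 2 * normCDF 0 σ (b / 2) - 1 := by
  set c : ℝ := (σ * Real.sqrt (2 * Real.pi))⁻¹ with hc_def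
  have hsqrt : 0 < Real.sqrt (2 * Real.pi) := Real.sqrt_pos.mpr (by positivity)
  have hc : 0 < c := by rw [hc_def]; positivity
  -- difference formula
  have habs : ∀ x : ℝ, |normCDF (a + b) σ x - normCDF a σ x|
      = c * ∫ z in (x - a - b)..(x - a), gK σ z := by
    intro x
    have hdiff : normCDF (a + b) σ x - normCDF a σ x
        = -(c * ∫ z in (x - a - b)..(x - a), gK σ z) := by
      rw [normCDF_eq hσ, normCDF_eq hσ, ← mul_sub,
        show x - (a + b) = x - a - b by ring,
        intervalIntegral.integral_Iic_sub_Iic ((gK_integrable hσ).integrableOn)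
          ((gK_integrable hσ).integrableOn),
        intervalIntegral.integral_symm]
      ring
    have hnn : 0 ≤ ∫ z in (x - a - b)..(x - a), gK σ z :=
      intervalIntegral.integral_nonneg (by linarith) (fun z _ => gK_nonneg σ z)
    rw [hdiff, abs_neg, abs_of_nonneg (by positivity)]
  -- value formula
  have hV : 2 * normCDF 0 σ (b / 2) - 1 = c * ∫ z in (-(b / 2))..(b / 2), gK σ z := by
    have e1 : normCDF 0 σ (b / 2) = c * ∫ z in Set.Iic (b / 2), gK σ z := by
      rw [normCDF_eq hσ, sub_zero]
    have erefl : (∫ z in Set.Ioi (-(b / 2)), gK σ z) = ∫ z in Set.Iic (b / 2), gK σ z := by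
      have := integral_comp_neg_Ioi (-(b / 2)) (gK σ)
      rw [neg_neg] at this
      rw [← this]
      apply setIntegral_congr_fun measurableSet_Ioi
      intro z _
      simp [gK, neg_sq]
    have e2 : (∫ z in Set.Iic (-(b / 2)), gK σ z) + ∫ z in Set.Iic (b / 2), gK σ z
        = σ * Real.sqrt (2 * Real.pi) := by
      rw [← erefl, intervalIntegral.integral_Iic_add_Ioi ((gK_integrable hσ).integrableOn)
        ((gK_integrable hσ).integrableOn), gK_total hσ]
    have e3 : (∫ z in Set.Iic (b / 2), gK σ z) - ∫ z in Set.Iic (-(b / 2)), gK σ z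
        = ∫ z in (-(b / 2))..(b / 2), gK σ z :=
      intervalIntegral.integral_Iic_sub_Iic ((gK_integrable hσ).integrableOn)
        ((gK_integrable hσ).integrableOn)
    have e4 : c * (σ * Real.sqrt (2 * Real.pi)) = 1 :=
      inv_mul_cancel₀ (by positivity)
    rw [e1]
    linear_combination c * e3 + c * e2 + e4
  -- supremum
  have hub : ∀ x : ℝ, |normCDF (a + b) σ x - normCDF a σ x| ≤ 2 * normCDF 0 σ (b / 2) - 1 := by
    intro x
    rw [habs x, hV]
    exact mul_le_mul_of_nonneg_left (gK_key hσ hb (x - a)) hc.le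
  have heq : |normCDF (a + b) σ (a + b / 2) - normCDF a σ (a + b / 2)|
      = 2 * normCDF 0 σ (b / 2) - 1 := by
    rw [habs, show a + b / 2 - a - b = -(b / 2) by ring, show a + b / 2 - a = b / 2 by ring]
    exact hV.symm
  unfold kolmDist
  apply le_antisymm (ciSup_le hub)
  have bdd : BddAbove (Set.range fun x => |normCDF (a + b) σ x - normCDF a σ x|) := by
    refine ⟨2 * normCDF 0 σ (b / 2) - 1, ?_⟩
    rintro y ⟨x, rfl⟩
    exact hub x
  calc 2 * normCDF 0 σ (b / 2) - 1
      = |normCDF (a + b) σ (a + b / 2) - normCDF a σ (a + b / 2)| := heq.symm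
    _ ≤ _ := le_ciSup bdd (a + b / 2)

/-- Lemma 2: `ρ(Φ_{a+b,σ}, Φ_{a,σ}) = 2 Φ_{0,σ}(|b|/2) − 1`. -/
theorem kolmDist_normCDF_shift (a σ b : ℝ) (hσ : 0 < σ) :
    kolmDist (normCDF (a + b) σ) (normCDF a σ) = 2 * normCDF 0 σ (|b| / 2) - 1 := by
  rcases le_total 0 b with hb | hb
  · rw [abs_of_nonneg hb]
    exact kolmDist_normCDF_shift_nonneg a σ b hσ hb
  · have hsymm : kolmDist (normCDF (a + b) σ) (normCDF a σ)
        = kolmDist (normCDF ((a + b) + (-b)) σ) (normCDF (a + b) σ) := by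
      rw [show (a + b) + (-b) = a by ring]
      unfold kolmDist
      exact iSup_congr fun x => abs_sub_comm _ _
    rw [hsymm, kolmDist_normCDF_shift_nonneg (a + b) σ (-b) hσ (by linarith),
      abs_of_nonpos hb]
end

section
/- (von Bahr–Esseen type inequality) Let 1 ≤ δ ≤ 2 and let ξ₁,…,ξₙ be independent random variables with E ξ_j = 0 and E|ξ_j|^δ < ∞ for each j. Then E|ξ₁+⋯+ξₙ|^δ ≤ (2 − 1/n) Σ_{j=1}^n E|ξ_j|^δ. -/
/-!
Write `φ(x) = |x| ^ δ`. For `1 ≤ δ ≤ 2` the elementary inequality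
`φ(x + y) ≤ φ(x) + φ'(x) y + 2 φ(y)` holds, and by homogeneity it suffices to check it at `x = 1`.
If `Y` is centred and independent of `X`, the linear term has mean `E[φ'(X)] E[Y] = 0`, so
`E φ(X + Y) ≤ E φ(X) + 2 E φ(Y)`. Adding the `ξ j` one at a time, starting from `ξ k`, gives
`E φ(∑ ξ j) ≤ 2 ∑ E φ(ξ j) - E φ(ξ k)` for every `k`; choosing `k` with the largest moment, which
is at least the average moment, yields the factor `2 - 1/n`.
-/

open MeasureTheory ProbabilityTheory

namespace Real

variable {δ : ℝ}

theorem rpow_one_add_le_one_add_mul_self_add_sq (hδ1 : 1 ≤ δ) (hδ2 : δ ≤ 2) {u : ℝ}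
    (hu : -1 ≤ u) : (1 + u) ^ δ ≤ 1 + δ * u + (δ - 1) * u ^ 2 := by
  have h0 : 0 ≤ 1 + u := by linarith
  calc (1 + u) ^ δ = (1 + u) * (1 + u) ^ (δ - 1) := by
        rw [← rpow_one_add' h0 (by linarith), add_sub_cancel]
    _ ≤ (1 + u) * (1 + (δ - 1) * u) :=
        mul_le_mul_of_nonneg_left
          (rpow_one_add_le_one_add_mul_self hu (by linarith) (by linarith)) h0
    _ = 1 + δ * u + (δ - 1) * u ^ 2 := by ring

theorem abs_one_add_rpow_le (hδ1 : 1 ≤ δ) (hδ2 : δ ≤ 2) (t : ℝ) :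
    |1 + t| ^ δ ≤ 1 + δ * t + 2 * |t| ^ δ := by
  have hδ0 : 0 ≤ δ := by linarith
  have ht_pow : 0 ≤ |t| ^ δ := by positivity
  rcases le_or_gt (-1) t with ht | ht
  · rcases le_or_gt t 1 with ht' | ht'
    · have hsq : t ^ 2 ≤ |t| ^ δ := by
        rw [← sq_abs, ← rpow_natCast]
        exact rpow_le_rpow_of_exponent_ge' (abs_nonneg t) (abs_le.2 ⟨ht, ht'⟩) hδ0 (by simpa)
      rw [abs_of_nonneg (by linarith)]
      nlinarith [rpow_one_add_le_one_add_mul_self_add_sq hδ1 hδ2 ht]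
    · -- for `t ≥ 1`, split off one factor `1 + t` and use subadditivity of `x ↦ x ^ (δ - 1)`
      have h0 : 0 ≤ t := by linarith
      have hsub : (1 + t) ^ (δ - 1) ≤ 1 + t ^ (δ - 1) := by
        simpa using rpow_add_le_add_rpow zero_le_one h0 (by linarith) (by linarith)
      have hpow : t ^ (δ - 1) ≤ t ^ δ := rpow_le_rpow_of_exponent_le ht'.le (by linarith)
      rw [abs_of_nonneg (by linarith), abs_of_nonneg h0]
      calc (1 + t) ^ δ = (1 + t) * (1 + t) ^ (δ - 1) := by
            rw [← rpow_one_add' (by linarith) (by linarith), add_sub_cancel]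
        _ ≤ (1 + t) * (1 + t ^ (δ - 1)) := mul_le_mul_of_nonneg_left hsub (by linarith)
        _ = 1 + t + t ^ (δ - 1) + t * t ^ (δ - 1) := by ring
        _ ≤ 1 + δ * t + 2 * t ^ δ := by
            rw [← rpow_one_add' h0 (by linarith), add_sub_cancel]
            nlinarith
  · -- for `t < -1`, Bernoulli's inequality `1 + δ (-t - 1) ≤ (-t) ^ δ` suffices
    have hbern := one_add_mul_self_le_rpow_one_add (s := -t - 1) (by linarith) hδ1
    have hmono : (-t - 1) ^ δ ≤ (-t) ^ δ := rpow_le_rpow (by linarith) (by linarith) hδ0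
    rw [show 1 + (-t - 1) = -t by ring] at hbern
    rw [abs_of_neg (by linarith), abs_of_neg (by linarith), show -(1 + t) = -t - 1 by ring]
    nlinarith

theorem abs_eq_mul_sign (x : ℝ) : |x| = x * sign x := by
  rcases lt_trichotomy x 0 with h | rfl | h
  · simp [abs_of_neg h, sign_of_neg h]
  · simp
  · simp [abs_of_pos h, sign_of_pos h]

theorem abs_sign_le_one (x : ℝ) : |sign x| ≤ 1 := by
  rcases sign_apply_eq x with h | h | h <;> simp [h]

theorem measurable_sign : Measurable sign :=
  Measurable.ite measurableSet_Iio measurable_const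
    (Measurable.ite measurableSet_Ioi measurable_const measurable_const)

theorem abs_add_rpow_le (hδ1 : 1 ≤ δ) (hδ2 : δ ≤ 2) (x y : ℝ) :
    |x + y| ^ δ ≤ |x| ^ δ + δ * |x| ^ (δ - 1) * sign x * y + 2 * |y| ^ δ := by
  rcases eq_or_ne x 0 with rfl | hx
  · simp only [zero_add, abs_zero, zero_rpow (by linarith : δ ≠ 0), sign_zero]
    linarith [rpow_nonneg (abs_nonneg y) δ]
  have hx' : 0 < |x| := abs_pos.2 hx
  have hscale (z : ℝ) : |x| ^ δ * |z / x| ^ δ = |z| ^ δ := by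
    rw [← mul_rpow hx'.le (abs_nonneg _), ← abs_mul, mul_div_cancel₀ z hx]
  have hlin : |x| ^ δ * (y / x) = |x| ^ (δ - 1) * sign x * y := by
    rw [rpow_sub_one hx'.ne']
    field_simp
    rw [mul_assoc, ← abs_eq_mul_sign]
  calc |x + y| ^ δ = |x| ^ δ * |1 + y / x| ^ δ := by
        rw [← hscale, add_div, div_self hx]
    _ ≤ |x| ^ δ * (1 + δ * (y / x) + 2 * |y / x| ^ δ) :=
        mul_le_mul_of_nonneg_left (abs_one_add_rpow_le hδ1 hδ2 _) (by positivity)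
    _ = |x| ^ δ + δ * |x| ^ (δ - 1) * sign x * y + 2 * |y| ^ δ := by
        rw [← hscale y]
        linear_combination δ * hlin

end Real

section Moments

open Real

variable {Ω : Type*} [MeasurableSpace Ω] {μ : Measure Ω} {δ : ℝ}

theorem integrable_abs_rpow_iff_memLp {X : Ω → ℝ} (hX : AEStronglyMeasurable X μ) (hδ : 0 < δ) :
    Integrable (fun ω => |X ω| ^ δ) μ ↔ MemLp X (ENNReal.ofReal δ) μ := by
  simpa [ENNReal.toReal_ofReal hδ.le, hδ] using
    integrable_norm_rpow_iff hX (p := ENNReal.ofReal δ) (by simpa using hδ) ENNReal.ofReal_ne_top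

theorem MeasureTheory.MemLp.integrable_abs_rpow [IsFiniteMeasure μ] {X : Ω → ℝ}
    (hX : MemLp X (ENNReal.ofReal δ) μ) (hδ : 0 ≤ δ) : Integrable (fun ω => |X ω| ^ δ) μ := by
  simpa [ENNReal.toReal_ofReal hδ] using hX.integrable_norm_rpow'

variable [IsProbabilityMeasure μ]

theorem integral_abs_add_rpow_le (hδ1 : 1 ≤ δ) (hδ2 : δ ≤ 2) {X Y : Ω → ℝ}
    (hX : MemLp X (ENNReal.ofReal δ) μ) (hY : MemLp Y (ENNReal.ofReal δ) μ)
    (hXY : IndepFun X Y μ) (hY0 : μ[Y] = 0) :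
    ∫ ω, |X ω + Y ω| ^ δ ∂μ ≤ ∫ ω, |X ω| ^ δ ∂μ + 2 * ∫ ω, |Y ω| ^ δ ∂μ := by
  have hδ0 : 0 ≤ δ := by linarith
  set g : ℝ → ℝ := fun x => δ * |x| ^ (δ - 1) * sign x
  have hg : Measurable g := by
    have := measurable_sign
    fun_prop
  have hgX : Integrable (fun ω => g (X ω)) μ := by
    have hpow : Integrable (fun ω => |X ω| ^ (δ - 1)) μ := by
      simpa using integrable_norm_rpow_of_le hX.1 (by linarith) hδ0 (by linarith)
        (by simpa using hX.integrable_abs_rpow hδ0)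
    refine (hpow.const_mul δ).mono'
      (hg.comp_aemeasurable hX.1.aemeasurable).aestronglyMeasurable (ae_of_all _ fun ω => ?_)
    simp only [g, norm_mul, Real.norm_eq_abs, abs_of_nonneg hδ0,
      abs_of_nonneg (rpow_nonneg (abs_nonneg _) _)]
    exact mul_le_of_le_one_right (by positivity) (abs_sign_le_one (X ω))
  have hY1 : Integrable Y μ := hY.integrable (by simpa using hδ1)
  have hgXY : IndepFun (fun ω => g (X ω)) Y μ := hXY.comp hg measurable_id
  have hcross : ∫ ω, g (X ω) * Y ω ∂μ = 0 := by
    simpa [hY0] using hgXY.integral_mul_eq_mul_integral hgX.1 hY1.1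
  have hXint := hX.integrable_abs_rpow hδ0
  have hYint := hY.integrable_abs_rpow hδ0
  have hcross_int : Integrable (fun ω => g (X ω) * Y ω) μ := hgXY.integrable_mul hgX hY1
  have hmain : Integrable (fun ω => |X ω| ^ δ + g (X ω) * Y ω) μ := hXint.add hcross_int
  calc ∫ ω, |X ω + Y ω| ^ δ ∂μ
      ≤ ∫ ω, (|X ω| ^ δ + g (X ω) * Y ω + 2 * |Y ω| ^ δ) ∂μ :=
        integral_mono ((hX.add hY).integrable_abs_rpow hδ0) (hmain.add (hYint.const_mul 2))
          fun ω => abs_add_rpow_le hδ1 hδ2 (X ω) (Y ω)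
    _ = ∫ ω, |X ω| ^ δ ∂μ + 2 * ∫ ω, |Y ω| ^ δ ∂μ := by
        rw [integral_add hmain (hYint.const_mul 2), integral_add hXint hcross_int, hcross,
          integral_const_mul, add_zero]

theorem integral_abs_sum_insert_rpow_le (hδ1 : 1 ≤ δ) (hδ2 : δ ≤ 2) {ι : Type*} [DecidableEq ι]
    {ξ : ι → Ω → ℝ} (hξ : ∀ j, MemLp (ξ j) (ENNReal.ofReal δ) μ) (hindep : iIndepFun ξ μ)
    (hmean : ∀ j, μ[ξ j] = 0) {k : ι} {s : Finset ι} (hk : k ∉ s) :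
    ∫ ω, |∑ j ∈ insert k s, ξ j ω| ^ δ ∂μ ≤
      ∫ ω, |ξ k ω| ^ δ ∂μ + 2 * ∑ j ∈ s, ∫ ω, |ξ j ω| ^ δ ∂μ := by
  induction s using Finset.induction_on with
  | empty => simp
  | insert a s ha ih =>
    have hak : a ∉ insert k s := by grind
    have hindep_a : IndepFun (∑ j ∈ insert k s, ξ j) (ξ a) μ :=
      hindep.indepFun_finsetSum_of_notMem₀ (fun j => (hξ j).1.aemeasurable) hak
    have hstep := integral_abs_add_rpow_le hδ1 hδ2 (memLp_finsetSum' _ fun j _ => hξ j)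
      (hξ a) hindep_a (hmean a)
    simp only [Finset.sum_apply, add_comm _ (ξ a _)] at hstep
    simp only [Finset.insert_comm k a, Finset.sum_insert hak, Finset.sum_insert ha]
    linarith [ih (by grind)]

end Moments

/-- Lemma 4 (ii) (von Bahr–Esseen): for `1 ≤ δ ≤ 2` and independent, centered random
variables with finite `δ`-th absolute moments,
`E|ξ₁+⋯+ξₙ|^δ ≤ (2 − 1/n) Σ_j E|ξ_j|^δ`. -/
theorem vonBahrEsseen {Ω : Type*} [MeasurableSpace Ω] (P : Measure Ω)
    [IsProbabilityMeasure P] (n : ℕ) (hn : 0 < n) (ξ : Fin n → Ω → ℝ)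
    (hmeas : ∀ j, Measurable (ξ j))
    (hindep : iIndepFun ξ P)
    (hmean : ∀ j, ∫ ω, ξ j ω ∂P = 0)
    (δ : ℝ) (hδ1 : 1 ≤ δ) (hδ2 : δ ≤ 2)
    (hfin : ∀ j, Integrable (fun ω => |ξ j ω| ^ δ) P) :
    ∫ ω, |∑ j, ξ j ω| ^ δ ∂P ≤ (2 - 1 / n) * ∑ j, ∫ ω, |ξ j ω| ^ δ ∂P := by
  set m : Fin n → ℝ := fun j => ∫ ω, |ξ j ω| ^ δ ∂P
  have hξ j :=
    (integrable_abs_rpow_iff_memLp (hmeas j).aestronglyMeasurable (by linarith)).1 (hfin j)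
  have hbound (k : Fin n) : ∫ ω, |∑ j, ξ j ω| ^ δ ∂P ≤ 2 * ∑ j, m j - m k := by
    have h := integral_abs_sum_insert_rpow_le hδ1 hδ2 hξ hindep hmean
      (Finset.notMem_erase k Finset.univ)
    rw [Finset.insert_erase (Finset.mem_univ k), Finset.sum_erase_eq_sub (Finset.mem_univ k)] at h
    linarith
  obtain ⟨k, -, hk⟩ : ∃ k ∈ Finset.univ, (∑ j, m j) / n ≤ m k := by
    refine Finset.exists_le_of_sum_le (Finset.univ_nonempty_iff.2 ⟨⟨0, hn⟩⟩) ?_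
    simp [Finset.card_univ, mul_div_cancel₀ _ (by positivity : (n : ℝ) ≠ 0)]
  calc ∫ ω, |∑ j, ξ j ω| ^ δ ∂P ≤ 2 * ∑ j, m j - m k := hbound k
    _ ≤ 2 * ∑ j, m j - (∑ j, m j) / n := by linarith
    _ = (2 - 1 / n) * ∑ j, m j := by ring
end

section
/- (Smoothing inequality) Let ζ and η be random variables on the same probability space, a ∈ ℝ, σ > 0, and ε > 0. Then ρ(F_{ζ+η}, Φ_{a,σ}) ≤ ρ(F_ζ, Φ_{a,σ}) + [2Φ_{0,σ}(ε/2) − 1] + P(|η| > ε), where ρ is the Kolmogorov distance. -/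
open MeasureTheory Real

/-- The distribution function `F_ξ(x) = P(ξ < x)` of a random variable `ξ`. -/
noncomputable def cdf {Ω : Type*} [MeasurableSpace Ω] (P : Measure Ω) (ξ : Ω → ℝ) (x : ℝ) : ℝ :=
  (P {ω | ξ ω < x}).toReal

/-!
On the event `|η| ≤ ε` we have `ζ - ε ≤ ζ + η ≤ ζ + ε`, so
`F_ζ(x - ε) - P(|η| > ε) ≤ F_{ζ+η}(x) ≤ F_ζ(x + ε) + P(|η| > ε)`. Comparing with `Φ_{a,σ}` then
costs the largest increment of `Φ_{a,σ}` over an interval of length `ε`. The normal density is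
even and decreasing in `|z|`, so that increment is attained by the interval centred at the mean,
where it equals `Φ_{0,σ}(ε/2) - Φ_{0,σ}(-ε/2) = 2Φ_{0,σ}(ε/2) - 1`.
-/

open ProbabilityTheory (gaussianPDFReal gaussianPDFReal_nonneg gaussianPDFReal_sub
  integrable_gaussianPDFReal integral_gaussianPDFReal_eq_one)

open Set

section WindowIntegral

variable {f : ℝ → ℝ}

lemma integral_window_le_centered_of_le (hf : ∀ p q, IntervalIntegrable f volume p q)
    (hf_abs : ∀ y z, |z| ≤ |y| → f y ≤ f z) {ε u : ℝ} (hε : 0 ≤ ε) (hu : -(ε / 2) ≤ u) :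
    ∫ z in u..u + ε, f z ≤ ∫ z in -(ε / 2)..ε / 2, f z := by
  -- Shifted left by `ε`, the part `[ε/2, u + ε]` of the window lands in `[-ε/2, u]`, closer to 0.
  have hshift : ∫ z in ε / 2..u + ε, f z = ∫ z in -(ε / 2)..u, f (z + ε) := by
    rw [intervalIntegral.integral_comp_add_right]; ring_nf
  have hmono : ∫ z in -(ε / 2)..u, f (z + ε) ≤ ∫ z in -(ε / 2)..u, f z := by
    refine intervalIntegral.integral_mono_on hu ?_ (hf _ _) fun z hz => hf_abs _ _ ?_
    · simpa using (hf (-(ε / 2) + ε) (u + ε)).comp_add_right ε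
    · exact (abs_le.2 ⟨by linarith [hz.1], by linarith⟩).trans (le_abs_self _)
  rw [← intervalIntegral.integral_add_adjacent_intervals (hf u (ε / 2)) (hf _ _),
    ← intervalIntegral.integral_add_adjacent_intervals (hf (-(ε / 2)) u) (hf _ _)]
  linarith

lemma integral_window_le_centered (hf : ∀ p q, IntervalIntegrable f volume p q)
    (hf_abs : ∀ y z, |z| ≤ |y| → f y ≤ f z) {ε : ℝ} (hε : 0 ≤ ε) (u : ℝ) :
    ∫ z in u..u + ε, f z ≤ ∫ z in -(ε / 2)..ε / 2, f z := by
  rcases le_or_gt (-(ε / 2)) u with hu | hu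
  · exact integral_window_le_centered_of_le hf hf_abs hε hu
  · have heven : ∀ z, f (-z) = f z := fun z =>
      le_antisymm (hf_abs _ _ (abs_neg z).ge) (hf_abs _ _ (abs_neg z).le)
    have h := integral_window_le_centered_of_le hf hf_abs hε (u := -(u + ε)) (by linarith)
    rwa [show -(u + ε) + ε = -u by ring, ← intervalIntegral.integral_comp_neg,
      funext heven] at h

end WindowIntegral

section NormalCDF

variable {σ : ℝ}

lemma gaussianPDFReal_zero_le_of_abs_le (v : NNReal) {y z : ℝ} (h : |z| ≤ |y|) :
    gaussianPDFReal 0 v y ≤ gaussianPDFReal 0 v z := by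
  simp only [gaussianPDFReal, sub_zero]
  gcongr _ * rexp (-?_ / _)
  exact sq_le_sq.2 h

lemma toNNReal_sq_ne_zero (hσ : σ ≠ 0) : (σ ^ 2).toNNReal ≠ 0 :=
  (Real.toNNReal_pos.2 (by positivity)).ne'

lemma normCDF_eq_integral_gaussianPDFReal (hσ : 0 < σ) (a x : ℝ) :
    normCDF a σ x = ∫ z in Iic x, gaussianPDFReal a (σ ^ 2).toNNReal z := by
  simp only [normCDF, gaussianPDFReal, Real.coe_toNNReal _ (sq_nonneg σ)]
  rw [integral_const_mul, mul_comm (2 * π), Real.sqrt_mul (sq_nonneg σ), Real.sqrt_sq hσ.le]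

lemma normCDF_mem_Icc (hσ : 0 < σ) (a x : ℝ) : normCDF a σ x ∈ Icc 0 1 := by
  rw [normCDF_eq_integral_gaussianPDFReal hσ]
  refine ⟨setIntegral_nonneg measurableSet_Iic fun z _ => gaussianPDFReal_nonneg _ _ z, ?_⟩
  rw [← integral_gaussianPDFReal_eq_one a (toNNReal_sq_ne_zero hσ.ne')]
  exact setIntegral_le_integral (integrable_gaussianPDFReal _ _)
    (ae_of_all _ (gaussianPDFReal_nonneg _ _))

lemma normCDF_sub_normCDF (hσ : 0 < σ) (a x y : ℝ) :
    normCDF a σ y - normCDF a σ x = ∫ z in x..y, gaussianPDFReal a (σ ^ 2).toNNReal z := by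
  rw [normCDF_eq_integral_gaussianPDFReal hσ, normCDF_eq_integral_gaussianPDFReal hσ,
    intervalIntegral.integral_Iic_sub_Iic (integrable_gaussianPDFReal _ _).integrableOn
      (integrable_gaussianPDFReal _ _).integrableOn]

lemma normCDF_zero_neg (hσ : 0 < σ) (x : ℝ) : normCDF 0 σ (-x) = 1 - normCDF 0 σ x := by
  have hint := integrable_gaussianPDFReal 0 (σ ^ 2).toNNReal
  have heven : (fun z => gaussianPDFReal 0 (σ ^ 2).toNNReal (-z)) =
      gaussianPDFReal 0 (σ ^ 2).toNNReal := funext fun z => by simp only [gaussianPDFReal, sub_zero, neg_sq]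
  rw [normCDF_eq_integral_gaussianPDFReal hσ, normCDF_eq_integral_gaussianPDFReal hσ,
    ← integral_gaussianPDFReal_eq_one 0 (toNNReal_sq_ne_zero hσ.ne'),
    ← intervalIntegral.integral_Iic_add_Ioi hint.integrableOn hint.integrableOn,
    ← integral_comp_neg_Iic, heven]
  ring

lemma normCDF_add_sub_le (hσ : 0 < σ) {ε : ℝ} (hε : 0 ≤ ε) (a x : ℝ) :
    normCDF a σ (x + ε) - normCDF a σ x ≤ 2 * normCDF 0 σ (ε / 2) - 1 := by
  have hint := integrable_gaussianPDFReal 0 (σ ^ 2).toNNReal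
  have hwindow := integral_window_le_centered (fun p q => hint.intervalIntegrable)
    (fun y z => gaussianPDFReal_zero_le_of_abs_le _) hε (x - a)
  rw [show x - a + ε = x + ε - a by ring,
    ← intervalIntegral.integral_comp_sub_right (gaussianPDFReal 0 _)] at hwindow
  simp only [gaussianPDFReal_sub, zero_add] at hwindow
  rw [← normCDF_sub_normCDF hσ, ← normCDF_sub_normCDF hσ, normCDF_zero_neg hσ] at hwindow
  linarith

end NormalCDF

section Smoothing

variable {Ω : Type*} [MeasurableSpace Ω] (P : Measure Ω)

lemma cdf_mem_Icc [IsProbabilityMeasure P] (ξ : Ω → ℝ) (x : ℝ) : cdf P ξ x ∈ Icc 0 1 :=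
  ⟨measureReal_nonneg, measureReal_le_one⟩

lemma cdf_add_le [IsFiniteMeasure P] (ζ η : Ω → ℝ) (ε x : ℝ) :
    cdf P (fun ω => ζ ω + η ω) x ≤ cdf P ζ (x + ε) + P.real {ω | ε < |η ω|} := by
  refine (measureReal_mono fun ω (hω : ζ ω + η ω < x) => ?_).trans (measureReal_union_le _ _)
  by_contra! h
  simp only [mem_union, mem_ofPred_eq, not_or, not_lt, abs_le] at h
  linarith [h.2.1]

lemma cdf_sub_le [IsFiniteMeasure P] (ζ η : Ω → ℝ) (ε x : ℝ) :
    cdf P ζ (x - ε) ≤ cdf P (fun ω => ζ ω + η ω) x + P.real {ω | ε < |η ω|} := by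
  refine (measureReal_mono fun ω (hω : ζ ω < x - ε) => ?_).trans (measureReal_union_le _ _)
  by_contra! h
  simp only [mem_union, mem_ofPred_eq, not_or, not_lt, abs_le] at h
  linarith [h.2.2]

end Smoothing

lemma abs_sub_le_kolmDist {H G : ℝ → ℝ} (hH : ∀ x, H x ∈ Icc 0 1) (hG : ∀ x, G x ∈ Icc 0 1)
    (x : ℝ) : |H x - G x| ≤ kolmDist H G := by
  refine le_ciSup (f := fun y => |H y - G y|) ⟨1, ?_⟩ x
  rintro _ ⟨y, rfl⟩
  exact abs_sub_le_of_nonneg_of_le (hH y).1 (hH y).2 (hG y).1 (hG y).2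

theorem smoothing_inequality_general {Ω : Type*} [MeasurableSpace Ω] (P : Measure Ω)
    [IsProbabilityMeasure P] (ζ η : Ω → ℝ)
    (a σ ε : ℝ) (hσ : 0 < σ) (hε : 0 < ε) :
    kolmDist (cdf P (fun ω => ζ ω + η ω)) (normCDF a σ) ≤
      kolmDist (cdf P ζ) (normCDF a σ) + (2 * normCDF 0 σ (ε / 2) - 1) +
        (P {ω | ε < |η ω|}).toReal := by
  have hρ := abs_sub_le_kolmDist (cdf_mem_Icc P ζ) (normCDF_mem_Icc hσ a)
  rw [← measureReal_def]
  refine ciSup_le fun x => abs_sub_le_iff.2 ⟨?_, ?_⟩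
  · linarith [cdf_add_le P ζ η ε x, (abs_le.1 (hρ (x + ε))).2, normCDF_add_sub_le hσ hε.le a x]
  · have hΦ := normCDF_add_sub_le hσ hε.le a (x - ε)
    rw [sub_add_cancel] at hΦ
    linarith [cdf_sub_le P ζ η ε x, (abs_le.1 (hρ (x - ε))).1]

/-- Smoothing inequality:
`ρ(F_{ζ+η}, Φ_{a,σ}) ≤ ρ(F_ζ, Φ_{a,σ}) + [2Φ_{0,σ}(ε/2) − 1] + P(|η| > ε)`. -/
theorem smoothing_inequality {Ω : Type*} [MeasurableSpace Ω] (P : Measure Ω)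
    [IsProbabilityMeasure P] (ζ η : Ω → ℝ) (hζ : Measurable ζ) (hη : Measurable η)
    (a σ ε : ℝ) (hσ : 0 < σ) (hε : 0 < ε) :
    kolmDist (cdf P (fun ω => ζ ω + η ω)) (normCDF a σ) ≤
      kolmDist (cdf P ζ) (normCDF a σ) + (2 * normCDF 0 σ (ε / 2) - 1) +
        (P {ω | ε < |η ω|}).toReal :=
  smoothing_inequality_general P ζ η a σ ε hσ hε
end
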